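/- arXiv:1303.2968 — 2 statements merged into one kernel-verified Lean document; each statement's English description precedes it below -/
import Mathlib

section
/- Let f : ℂ → ℂ be entire, and suppose there exists α < 2 and C > 0 such that ∫_{B(0,R)} |f| ≤ C R^α for all R > 1. Then f is constant. -/
/-!
If `f` is entire, the mean value property on circles, integrated in polar coordinates, gives
`π r² ‖f z‖ ≤ ∫_{B(z,r)} ‖f‖`. For `‖z‖ < r` the disk `B(z,r)` lies in `B(0,2r)`, so the growth
hypothesis yields `‖f z‖ ≤ C 2^α r^(α-2) / π`, which tends to `0` as `r → ∞` because `α < 2`.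
Hence `f ≡ 0`.
-/

open MeasureTheory Metric Real Set Filter Topology

section PolarCoordinates

variable {E : Type*} [NormedAddCommGroup E] [NormedSpace ℝ E]

theorem polarCoord_symm_eq_circleMap (s θ : ℝ) :
    Complex.polarCoord.symm (s, θ) = circleMap 0 s θ := by
  simp [circleMap, Complex.exp_mul_I, Complex.ofReal_cos, Complex.ofReal_sin]

theorem integral_Ioo_neg_pi_pi_eq_circleAverage (g : ℂ → E) (c : ℂ) (s : ℝ) :
    ∫ θ in Ioo (-π) π, g (circleMap c s θ) = (2 * π) • circleAverage g c s := by
  rw [circleAverage_eq_integral_add (-π), smul_inv_smul₀ (by positivity),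
    intervalIntegral.integral_comp_add_right (fun θ ↦ g (circleMap c s θ)), zero_add,
    ← integral_Ioc_eq_integral_Ioo, intervalIntegral.integral_of_le (by linarith [pi_pos])]
  ring_nf

theorem integral_ball_zero_eq_integral_circleAverage {g : ℂ → E} (hg : Continuous g) {r : ℝ}
    (hr : 0 ≤ r) :
    ∫ w in ball 0 r, g w = (2 * π) • ∫ s in 0..r, s • circleAverage g 0 s := by
  have hpolar : ∫ w in ball 0 r, g w
      = ∫ p in Ioo 0 r ×ˢ Ioo (-π) π, p.1 • g (Complex.polarCoord.symm p) := by
    rw [← integral_indicator measurableSet_ball, ← Complex.integral_comp_polarCoord_symm,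
      polarCoord_target]
    have hball : ∀ p ∈ Ioi (0:ℝ) ×ˢ Ioo (-π) π,
        p.1 • (ball 0 r).indicator g (Complex.polarCoord.symm p)
          = (Iio r ×ˢ univ).indicator (fun p ↦ p.1 • g (Complex.polarCoord.symm p)) p := by
      rintro ⟨s, θ⟩ ⟨hs, -⟩
      have hmem : Complex.polarCoord.symm (s, θ) ∈ ball 0 r ↔ s < r := by
        rw [mem_ball_zero_iff, Complex.norm_polarCoord_symm, abs_of_pos hs]
      simp only [indicator, hmem, mem_prod, mem_Iio, mem_univ, and_true]
      split_ifs <;> simp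
    rw [setIntegral_congr_fun (measurableSet_Ioi.prod measurableSet_Ioo) hball,
      setIntegral_indicator (measurableSet_Iio.prod .univ), prod_inter_prod, Ioi_inter_Iio,
      inter_univ]
  have hint : IntegrableOn (fun p : ℝ × ℝ ↦ p.1 • g (Complex.polarCoord.symm p))
      (Icc 0 r ×ˢ Icc (-π) π) :=
    have : Continuous fun p : ℝ × ℝ ↦ p.1 • g (Complex.polarCoord.symm p) := by
      simp only [Complex.polarCoord_symm_apply]; fun_prop
    this.continuousOn.integrableOn_compact (isCompact_Icc.prod isCompact_Icc)
  rw [hpolar, Measure.volume_eq_prod, setIntegral_prod _ ?_, intervalIntegral.integral_of_le hr,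
    integral_Ioc_eq_integral_Ioo, ← integral_smul]
  · refine setIntegral_congr_fun measurableSet_Ioo fun s _ ↦ ?_
    simp_rw [integral_smul, polarCoord_symm_eq_circleMap, integral_Ioo_neg_pi_pi_eq_circleAverage,
      smul_comm s]
  · rw [← Measure.volume_eq_prod]
    exact hint.mono_set (prod_mono Ioo_subset_Icc_self Ioo_subset_Icc_self)

theorem integral_ball_eq_integral_circleAverage {g : ℂ → E} (hg : Continuous g) (c : ℂ) {r : ℝ}
    (hr : 0 ≤ r) :
    ∫ w in ball c r, g w = (2 * π) • ∫ s in 0..r, s • circleAverage g c s := by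
  have htrans := (measurePreserving_add_right volume c).setIntegral_preimage_emb
    (measurableEmbedding_addRight c) g (ball c r)
  rw [preimage_add_right_ball, sub_self] at htrans
  simp_rw [← htrans, ← circleAverage_map_add_const (f := g)]
  exact integral_ball_zero_eq_integral_circleAverage (by fun_prop) hr

end PolarCoordinates

section MeanValue

variable {F : Type*} [NormedAddCommGroup F] [NormedSpace ℂ F] [CompleteSpace F] {f : ℂ → F}

theorem norm_le_circleAverage_norm {c : ℂ} {R : ℝ} (hf : DiffContOnCl ℂ f (ball c |R|)) :
    ‖f c‖ ≤ circleAverage (‖f ·‖) c R := by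
  rw [← hf.circleAverage, circleAverage_def, circleAverage_def, norm_smul, smul_eq_mul,
    Real.norm_of_nonneg (by positivity)]
  gcongr
  exact intervalIntegral.norm_integral_le_integral_norm (by positivity)

theorem mul_norm_le_integral_ball_norm (hf : Differentiable ℂ f) (c : ℂ) {r : ℝ}
    (hr : 0 ≤ r) :
    π * r ^ 2 * ‖f c‖ ≤ ∫ w in ball c r, ‖f w‖ := by
  have hcont : Continuous (‖f ·‖) := hf.continuous.norm
  rw [integral_ball_eq_integral_circleAverage hcont c hr, smul_eq_mul]
  calc π * r ^ 2 * ‖f c‖ = 2 * π * ∫ s in 0..r, s * ‖f c‖ := by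
        rw [intervalIntegral.integral_mul_const, integral_id]; ring
    _ ≤ 2 * π * ∫ s in 0..r, s • circleAverage (‖f ·‖) c s := by
        gcongr
        refine intervalIntegral.integral_mono_on hr
          ((continuous_id.mul continuous_const).intervalIntegrable _ _) ?_ fun s hs ↦ ?_
        · exact (continuous_id.smul hcont.circleAverage).intervalIntegrable _ _
        · exact mul_le_mul_of_nonneg_left
            (norm_le_circleAverage_norm hf.differentiableOn.diffContOnCl) hs.1

theorem norm_le_mul_rpow_of_integral_ball_le (hf : Differentiable ℂ f) {α C : ℝ}
    (hgrowth : ∀ R : ℝ, 1 < R → (∫ z in ball (0:ℂ) R, ‖f z‖) ≤ C * R ^ α) {z : ℂ} {r : ℝ}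
    (hr : max ‖z‖ 1 < r) :
    ‖f z‖ ≤ C * 2 ^ α / π * r ^ (α - 2) := by
  obtain ⟨hzr, h1r⟩ := max_lt_iff.mp hr
  have hr0 : 0 < r := by linarith
  have hball : ball z r ⊆ ball 0 (2 * r) :=
    ball_subset_ball' (by rw [dist_zero_right]; linarith)
  have hmono : ∫ w in ball z r, ‖f w‖ ≤ ∫ w in ball 0 (2 * r), ‖f w‖ :=
    setIntegral_mono_set
      (hf.continuous.norm.locallyIntegrable.integrableOn_isCompact (isCompact_closedBall 0 (2 * r))
        |>.mono_set ball_subset_closedBall)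
      (.of_forall fun _ ↦ norm_nonneg _) hball.eventuallyLE
  have key : π * r ^ 2 * ‖f z‖ ≤ C * 2 ^ α * r ^ α := by
    calc π * r ^ 2 * ‖f z‖ ≤ ∫ w in ball 0 (2 * r), ‖f w‖ :=
          (mul_norm_le_integral_ball_norm hf z hr0.le).trans hmono
      _ ≤ C * (2 * r) ^ α := hgrowth _ (by linarith)
      _ = C * 2 ^ α * r ^ α := by rw [mul_rpow zero_le_two hr0.le, mul_assoc]
  rw [rpow_sub hr0, rpow_two]
  field_simp
  linarith

end MeanValue

theorem stmt_4_general (f : ℂ → ℂ) (hf : Differentiable ℂ f) (α C : ℝ) (hα : α < 2)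
    (hgrowth : ∀ R : ℝ, 1 < R →
      (∫ z in Metric.ball (0:ℂ) R, ‖f z‖) ≤ C * R ^ α) :
    ∃ c : ℂ, ∀ z, f z = c := by
  refine ⟨0, fun z ↦ norm_le_zero_iff.mp ?_⟩
  have hdecay : Tendsto (fun r : ℝ ↦ C * 2 ^ α / π * r ^ (α - 2)) atTop (𝓝 0) := by
    simpa [neg_sub] using (tendsto_rpow_neg_atTop (by linarith : 0 < 2 - α)).const_mul _
  exact ge_of_tendsto hdecay <| (eventually_gt_atTop _).mono fun r hr ↦
    norm_le_mul_rpow_of_integral_ball_le hf hgrowth hr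

/-- An entire function whose `L¹` norm on disks of radius `R` grows at most like `C R^α`
for some `α < 2` is constant. -/
theorem stmt_4 (f : ℂ → ℂ) (hf : Differentiable ℂ f) (α C : ℝ) (hα : α < 2) (hC : 0 < C)
    (hgrowth : ∀ R : ℝ, 1 < R →
      (∫ z in Metric.ball (0:ℂ) R, ‖f z‖) ≤ C * R ^ α) :
    ∃ c : ℂ, ∀ z, f z = c :=
  stmt_4_general f hf α C hα hgrowth
end

section
/- Let R be a bounded open rectangle in ℝ², E₁ ∈ L^q(R; ℝ²) and E₂ ∈ L^{q'}(R; ℝ²) ∩ L²(R; ℝ²), with 1/q + 1/q' = 1, q < 2, where E₁ has renormalized energy W(E₁, 1_R) with respect to finitely many singular points x_i ∈ R. Then W(E₁ + E₂, 1_R) ≤ W(E₁, 1_R) + ‖E₁‖_{L^q(R)} ‖E₂‖_{L^{q'}(R)} + ½‖E₂‖²_{L²(R)}. -/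
/-!
On `R` minus the `η`-balls around the singular points, `|E₁ + E₂|² ≤ |E₁|² + 2|E₁||E₂| + |E₂|²`.
The last two terms are bounded, uniformly in `η`, by their integrals over all of `R`, and Hölder
bounds the cross term by `‖E₁‖_q ‖E₂‖_{q'}`. Both energies carry the same counterterm
`π n log η`, so the inequality survives the limit `η → 0`.
-/

open MeasureTheory Filter
open scoped Real Topology

/-- An open rectangle in the plane (identified with `ℂ`). -/
def rectC (a₁ b₁ a₂ b₂ : ℝ) : Set ℂ := {z : ℂ | z.re ∈ Set.Ioo a₁ b₁ ∧ z.im ∈ Set.Ioo a₂ b₂}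

/-- `W(E, 1_U) = w` for a vector field `E` with finitely many singular points `pts`:
the renormalized limit `lim_{η→0⁺} (½ ∫_{U ∖ ∪ B(p,η)} |E|² + π (#pts) log η) = w`. -/
def WrectHas (U : Set ℂ) (pts : Finset ℂ) (E : ℂ → ℂ) (w : ℝ) : Prop :=
  Tendsto
    (fun η : ℝ =>
      (1 / 2) * (∫ z in U \ ⋃ p ∈ pts, Metric.ball p η, ‖E z‖ ^ 2)
        + π * (pts.card : ℝ) * Real.log η)
    (nhdsWithin 0 (Set.Ioi (0:ℝ))) (nhds w)

section NormSquareIntegrals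

variable {α E : Type*} [MeasurableSpace α] [NormedAddCommGroup E] {μ : Measure α} {f g : α → E}

theorem toReal_eLpNorm_ofReal {p : ℝ} (hp : 0 < p) (hf : AEStronglyMeasurable f μ) :
    (eLpNorm f (ENNReal.ofReal p) μ).toReal = (∫ x, ‖f x‖ ^ p ∂μ) ^ (1 / p) := by
  rw [toReal_eLpNorm hf, lpNorm_eq_integral_norm_rpow_toReal (by simpa using hp)
    ENNReal.ofReal_ne_top hf, ENNReal.toReal_ofReal hp.le, one_div]

theorem integral_norm_sq_eq_toReal_eLpNorm_sq (hf : AEStronglyMeasurable f μ) :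
    ∫ x, ‖f x‖ ^ 2 ∂μ = (eLpNorm f 2 μ).toReal ^ 2 := by
  have h := toReal_eLpNorm_ofReal two_pos hf
  rw [ENNReal.ofReal_ofNat] at h
  rw [h, ← Real.rpow_natCast, ← Real.rpow_mul (integral_nonneg fun x => by positivity)]
  norm_num

theorem integral_norm_mul_norm_le_eLpNorm_mul_eLpNorm {p q : ℝ} (hpq : p.HolderConjugate q)
    (hf : MemLp f (ENNReal.ofReal p) μ) (hg : MemLp g (ENNReal.ofReal q) μ) :
    ∫ x, ‖f x‖ * ‖g x‖ ∂μ ≤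
      (eLpNorm f (ENNReal.ofReal p) μ).toReal * (eLpNorm g (ENNReal.ofReal q) μ).toReal := by
  rw [toReal_eLpNorm_ofReal hpq.pos hf.1, toReal_eLpNorm_ofReal hpq.symm.pos hg.1]
  exact integral_mul_norm_le_Lp_mul_Lq hpq hf hg

theorem integral_norm_add_sq_le (hf : AEStronglyMeasurable f μ) (hg : MemLp g 2 μ)
    (hfg : Integrable (fun x => ‖f x‖ * ‖g x‖) μ) :
    ∫ x, ‖f x + g x‖ ^ 2 ∂μ ≤
      ∫ x, ‖f x‖ ^ 2 ∂μ + 2 * ∫ x, ‖f x‖ * ‖g x‖ ∂μ + ∫ x, ‖g x‖ ^ 2 ∂μ := by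
  have hg2 : Integrable (fun x => ‖g x‖ ^ 2) μ :=
    (memLp_two_iff_integrable_sq_norm hg.1).mp hg
  by_cases hf2 : MemLp f 2 μ
  · have hf2int := (memLp_two_iff_integrable_sq_norm hf).mp hf2
    have hfg2 : Integrable (fun x => ‖f x + g x‖ ^ 2) μ :=
      (memLp_two_iff_integrable_sq_norm (hf.add hg.1)).mp (hf2.add hg)
    have h12 : Integrable (fun x => ‖f x‖ ^ 2 + 2 * (‖f x‖ * ‖g x‖)) μ :=
      hf2int.add (hfg.const_mul 2)
    calc ∫ x, ‖f x + g x‖ ^ 2 ∂μ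
        ≤ ∫ x, (‖f x‖ ^ 2 + 2 * (‖f x‖ * ‖g x‖) + ‖g x‖ ^ 2) ∂μ := by
          refine integral_mono hfg2 (h12.add hg2) fun x => ?_
          have := norm_add_le (f x) (g x)
          nlinarith [norm_nonneg (f x + g x)]
      _ = _ := by
          rw [integral_add h12 hg2, integral_add hf2int (hfg.const_mul 2), integral_const_mul]
  · -- Since `g ∈ L²`, `f + g ∉ L²` as well, so both squared integrals take the junk value `0`.
    have hfg2 : ¬ MemLp (f + g) 2 μ := fun h => hf2 (by simpa using h.sub hg)
    rw [integral_undef (f := fun x => ‖f x + g x‖ ^ 2)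
        (mt (memLp_two_iff_integrable_sq_norm (hf.add hg.1)).mpr hfg2),
      integral_undef (mt (memLp_two_iff_integrable_sq_norm hf).mpr hf2)]
    have hfg_nonneg : 0 ≤ ∫ x, ‖f x‖ * ‖g x‖ ∂μ := integral_nonneg fun x => by positivity
    have hg2_nonneg : 0 ≤ ∫ x, ‖g x‖ ^ 2 ∂μ := integral_nonneg fun x => by positivity
    linarith

theorem setIntegral_norm_add_sq_le (s : Set α) (hf : AEStronglyMeasurable f μ) (hg : MemLp g 2 μ)
    (hfg : Integrable (fun x => ‖f x‖ * ‖g x‖) μ) :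
    ∫ x in s, ‖f x + g x‖ ^ 2 ∂μ ≤
      ∫ x in s, ‖f x‖ ^ 2 ∂μ + 2 * ∫ x, ‖f x‖ * ‖g x‖ ∂μ + ∫ x, ‖g x‖ ^ 2 ∂μ := by
  have hcross : ∫ x in s, ‖f x‖ * ‖g x‖ ∂μ ≤ ∫ x, ‖f x‖ * ‖g x‖ ∂μ :=
    setIntegral_le_integral hfg (.of_forall fun x => by positivity)
  have hsq : ∫ x in s, ‖g x‖ ^ 2 ∂μ ≤ ∫ x, ‖g x‖ ^ 2 ∂μ :=
    setIntegral_le_integral ((memLp_two_iff_integrable_sq_norm hg.1).mp hg)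
      (.of_forall fun x => by positivity)
  have := integral_norm_add_sq_le hf.restrict (hg.restrict s) hfg.restrict
  linarith

end NormSquareIntegrals

theorem WrectHas.le_add_of_forall_le {U : Set ℂ} {pts : Finset ℂ} {E F : ℂ → ℂ} {w v C : ℝ}
    (hE : WrectHas U pts E w) (hF : WrectHas U pts F v)
    (h : ∀ η : ℝ, (1 / 2) * ∫ z in U \ ⋃ p ∈ pts, Metric.ball p η, ‖F z‖ ^ 2 ≤
      (1 / 2) * (∫ z in U \ ⋃ p ∈ pts, Metric.ball p η, ‖E z‖ ^ 2) + C) :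
    v ≤ w + C :=
  le_of_tendsto_of_tendsto' hF (hE.add_const C) fun η => by linarith [h η]

theorem stmt_16_general (a₁ b₁ a₂ b₂ : ℝ) (pts : Finset ℂ)
    (E₁ E₂ : ℂ → ℂ) (q q' : ℝ) (hq1 : 1 < q) (hconj : 1 / q + 1 / q' = 1)
    (hE₁ : MemLp E₁ (ENNReal.ofReal q) (volume.restrict (rectC a₁ b₁ a₂ b₂)))
    (hE₂ : MemLp E₂ (ENNReal.ofReal q') (volume.restrict (rectC a₁ b₁ a₂ b₂)))
    (hE₂2 : MemLp E₂ 2 (volume.restrict (rectC a₁ b₁ a₂ b₂)))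
    (w w₁ : ℝ)
    (hw₁ : WrectHas (rectC a₁ b₁ a₂ b₂) pts E₁ w₁)
    (hw : WrectHas (rectC a₁ b₁ a₂ b₂) pts (fun z => E₁ z + E₂ z) w) :
    w ≤ w₁ +
        (eLpNorm E₁ (ENNReal.ofReal q) (volume.restrict (rectC a₁ b₁ a₂ b₂))).toReal *
          (eLpNorm E₂ (ENNReal.ofReal q') (volume.restrict (rectC a₁ b₁ a₂ b₂))).toReal +
        (1 / 2) * ((eLpNorm E₂ 2 (volume.restrict (rectC a₁ b₁ a₂ b₂))).toReal) ^ 2 := by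
  have hqq' : q.HolderConjugate q' :=
    Real.holderConjugate_iff.mpr ⟨hq1, by simpa only [one_div] using hconj⟩
  have : ENNReal.HolderConjugate (ENNReal.ofReal q) (ENNReal.ofReal q') := hqq'.ennrealOfReal
  have hcross := integral_norm_mul_norm_le_eLpNorm_mul_eLpNorm hqq' hE₁ hE₂
  rw [← integral_norm_sq_eq_toReal_eLpNorm_sq hE₂2.1, add_assoc]
  refine hw₁.le_add_of_forall_le hw fun η => ?_
  have h := setIntegral_norm_add_sq_le (rectC a₁ b₁ a₂ b₂ \ ⋃ p ∈ pts, Metric.ball p η) hE₁.1 hE₂2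
    (hE₁.norm.integrable_mul hE₂.norm)
  rw [Measure.restrict_restrict_of_subset Set.sdiff_subset] at h
  linarith

/-- If `E₁ ∈ L^q`, `E₂ ∈ L^{q'} ∩ L²` on a rectangle `R` with `1/q + 1/q' = 1`, `q < 2`,
and `E₁` has renormalized energy `W(E₁, 1_R)` w.r.t. finitely many singular points, then
`W(E₁+E₂, 1_R) ≤ W(E₁, 1_R) + ‖E₁‖_{L^q} ‖E₂‖_{L^{q'}} + ½ ‖E₂‖²_{L²}`. -/
theorem stmt_16 (a₁ b₁ a₂ b₂ : ℝ) (hab₁ : a₁ < b₁) (hab₂ : a₂ < b₂)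
    (pts : Finset ℂ) (hpts : ↑pts ⊆ rectC a₁ b₁ a₂ b₂)
    (E₁ E₂ : ℂ → ℂ) (q q' : ℝ) (hq1 : 1 < q) (hq2 : q < 2) (hconj : 1 / q + 1 / q' = 1)
    (hE₁ : MemLp E₁ (ENNReal.ofReal q) (volume.restrict (rectC a₁ b₁ a₂ b₂)))
    (hE₂ : MemLp E₂ (ENNReal.ofReal q') (volume.restrict (rectC a₁ b₁ a₂ b₂)))
    (hE₂2 : MemLp E₂ 2 (volume.restrict (rectC a₁ b₁ a₂ b₂)))
    (w w₁ : ℝ)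
    (hw₁ : WrectHas (rectC a₁ b₁ a₂ b₂) pts E₁ w₁)
    (hw : WrectHas (rectC a₁ b₁ a₂ b₂) pts (fun z => E₁ z + E₂ z) w) :
    w ≤ w₁ +
        (eLpNorm E₁ (ENNReal.ofReal q) (volume.restrict (rectC a₁ b₁ a₂ b₂))).toReal *
          (eLpNorm E₂ (ENNReal.ofReal q') (volume.restrict (rectC a₁ b₁ a₂ b₂))).toReal +
        (1 / 2) * ((eLpNorm E₂ 2 (volume.restrict (rectC a₁ b₁ a₂ b₂))).toReal) ^ 2 :=
  stmt_16_general a₁ b₁ a₂ b₂ pts E₁ E₂ q q' hq1 hconj hE₁ hE₂ hE₂2 w w₁ hw₁ hw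
end
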